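/- arXiv:2007.14786 — 7 statements merged into one kernel-verified Lean document; each statement's English description precedes it below -/
import Mathlib

section
/- The function y(x) = ν(1+x)∫₀^{x/(1+x)} ((1−v)/v)^κ e^{κ/v} ∫₀^v u^{κ−1}/(1−u)^{κ+2} e^{−κ/u} du dv solves the second-order ordinary differential equation x² y''(x) + κ(1+x) y'(x) − κ y(x) = ν x for all x ∈ (0,∞). -/
open Real Set intervalIntegral

/-! Substituting `t = x / (1 + x)` writes `y x = ν (1 + x) F t`, where `F' = Φ := f G` with
`f v = ((1 - v) / v) ^ κ e^(κ / v)` and `G` the inner integral, whose integrand we call `g`.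
Since `f' / f = -κ / (v² (1 - v))` and `f g = 1 / (v (1 - v)²)`, `Φ` solves the first-order
equation `v² (1 - v) Φ' + κ Φ = v / (1 - v)`, and the substitution turns this into the
second-order equation for `y`. The only analytic point is the integrability of `Φ` at `0`:
for `u ≤ v` we have `e^(-κ/u) ≤ e^(-κ/v)`, so `G v ≤ (1 - v)^(-κ-2) e^(-κ/v) v^κ / κ` and
hence `Φ v ≤ 1 / (κ (1 - v)²)`. -/

open Filter Topology MeasureTheory

lemma hasDerivAt_integral_of_continuousOn_Ioo {φ : ℝ → ℝ} {a b t : ℝ}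
    (hφ : ContinuousOn φ (Ioo a b)) (hint : IntervalIntegrable φ volume a t) (ht : t ∈ Ioo a b) :
    HasDerivAt (fun s => ∫ x in a..s, φ x) (φ t) t :=
  integral_hasDerivAt_right hint (hφ.stronglyMeasurableAtFilter isOpen_Ioo t ht)
    (hφ.continuousAt (Ioo_mem_nhds ht.1 ht.2))

lemma intervalIntegrable_of_norm_le_mul_rpow {φ : ℝ → ℝ} {t C r : ℝ} (ht : 0 ≤ t) (hr : -1 < r)
    (hφ : ContinuousOn φ (Ioc 0 t)) (hle : ∀ u ∈ Ioc 0 t, ‖φ u‖ ≤ C * u ^ r) :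
    IntervalIntegrable φ volume 0 t := by
  rw [intervalIntegrable_iff_integrableOn_Ioc_of_le ht]
  have hbound : IntegrableOn (fun u => C * u ^ r) (Ioc 0 t) := by
    rw [← intervalIntegrable_iff_integrableOn_Ioc_of_le ht]
    exact (intervalIntegral.intervalIntegrable_rpow' hr).const_mul C
  exact hbound.mono' (hφ.aestronglyMeasurable measurableSet_Ioc)
    ((ae_restrict_iff' measurableSet_Ioc).2 (Eventually.of_forall hle))

lemma mem_Ioo_div_one_add {x : ℝ} (hx : 0 < x) : x / (1 + x) ∈ Ioo 0 1 :=
  ⟨by positivity, (div_lt_one (by positivity)).2 (by linarith)⟩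

lemma hasDerivAt_div_one_add {x : ℝ} (hx : 1 + x ≠ 0) :
    HasDerivAt (fun x => x / (1 + x)) (((1 + x) ^ 2)⁻¹) x := by
  refine ((hasDerivAt_id' x).fun_div ((hasDerivAt_id' x).const_add 1) hx).congr_deriv ?_
  field_simp
  ring

theorem ode_of_comp_div_one_add {κ ν : ℝ} {F Φ y : ℝ → ℝ}
    (hF : ∀ t ∈ Ioo (0 : ℝ) 1, HasDerivAt F (Φ t) t)
    (hΦ : ∀ t ∈ Ioo (0 : ℝ) 1,
      HasDerivAt Φ ((t / (1 - t) - κ * Φ t) / (t ^ 2 * (1 - t))) t)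
    (hy : ∀ x, y x = ν * (1 + x) * F (x / (1 + x))) {x : ℝ} (hx : 0 < x) :
    x ^ 2 * deriv (deriv y) x + κ * (1 + x) * deriv y x - κ * y x = ν * x := by
  obtain rfl : y = fun x => ν * (1 + x) * F (x / (1 + x)) := funext hy
  set y' : ℝ → ℝ := fun x => ν * (F (x / (1 + x)) + Φ (x / (1 + x)) * (1 + x)⁻¹)
  have hy' : ∀ x > 0, HasDerivAt (fun x => ν * (1 + x) * F (x / (1 + x))) (y' x) x := by
    intro x hx
    have h1x : 1 + x ≠ 0 := by positivity
    refine ((((hasDerivAt_id' x).const_add 1).const_mul ν).fun_mul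
      ((hF _ (mem_Ioo_div_one_add hx)).comp x (hasDerivAt_div_one_add h1x))).congr_deriv ?_
    simp only [y', Function.comp_apply]
    field_simp
  have hderiv : deriv (fun x => ν * (1 + x) * F (x / (1 + x))) =ᶠ[𝓝 x] y' := by
    filter_upwards [Ioi_mem_nhds hx] with z hz using (hy' z hz).deriv
  have hy'' : HasDerivAt y' (ν * (x ^ 2)⁻¹ * (x - κ * Φ (x / (1 + x)))) x := by
    have h1x : 1 + x ≠ 0 := by positivity
    have hτ := hasDerivAt_div_one_add h1x
    have hmem := mem_Ioo_div_one_add hx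
    refine ((((hF _ hmem).comp x hτ).fun_add (((hΦ _ hmem).comp x hτ).fun_mul
      (((hasDerivAt_id' x).const_add 1).fun_inv h1x))).const_mul ν).congr_deriv ?_
    have h1τ : 1 - x / (1 + x) = (1 + x)⁻¹ := by field_simp; ring
    simp only [Function.comp_apply, h1τ]
    field_simp
    ring
  rw [hderiv.deriv_eq, hy''.deriv, (hy' x hx).deriv]
  simp only [y']
  field_simp
  ring

namespace DoubleIntegralSolution

-- The integrands are those of the statement verbatim, so that its hypothesis on `y` is
-- definitionally the one of `ode_of_comp_div_one_add` for `F = outerIntegral κ`.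
noncomputable def innerIntegrand (κ u : ℝ) : ℝ := u ^ (κ - 1) * (1 - u) ^ (-(κ + 2)) * exp (-κ / u)

noncomputable def innerIntegral (κ v : ℝ) : ℝ := ∫ u in (0 : ℝ)..v, innerIntegrand κ u

noncomputable def outerWeight (κ v : ℝ) : ℝ := ((1 - v) / v) ^ κ * exp (κ / v)

noncomputable def outerIntegral (κ t : ℝ) : ℝ :=
  ∫ v in (0 : ℝ)..t, outerWeight κ v * innerIntegral κ v

variable {κ : ℝ}

lemma innerIntegrand_continuousOn : ContinuousOn (innerIntegrand κ) (Ioo 0 1) := by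
  unfold innerIntegrand
  fun_prop (disch := grind)

lemma innerIntegrand_nonneg {u : ℝ} (hu0 : 0 ≤ u) (hu1 : u ≤ 1) : 0 ≤ innerIntegrand κ u := by
  have : 0 ≤ 1 - u := by linarith
  unfold innerIntegrand
  positivity

lemma innerIntegrand_le (hκ : 0 ≤ κ) {u v : ℝ} (hu : 0 < u) (huv : u ≤ v) (hv : v < 1) :
    innerIntegrand κ u ≤ (1 - v) ^ (-(κ + 2)) * exp (-κ / v) * u ^ (κ - 1) := by
  have h1 : (1 - u) ^ (-(κ + 2)) ≤ (1 - v) ^ (-(κ + 2)) :=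
    rpow_le_rpow_of_nonpos (by linarith) (by linarith) (by linarith)
  have h2 : exp (-κ / u) ≤ exp (-κ / v) := by
    rw [exp_le_exp, neg_div, neg_div, neg_le_neg_iff]
    exact div_le_div_of_nonneg_left hκ hu huv
  unfold innerIntegrand
  calc u ^ (κ - 1) * (1 - u) ^ (-(κ + 2)) * exp (-κ / u)
      ≤ u ^ (κ - 1) * (1 - v) ^ (-(κ + 2)) * exp (-κ / v) := by gcongr
    _ = _ := by ring

lemma innerIntegrand_intervalIntegrable (hκ : 0 < κ) {v : ℝ} (hv0 : 0 ≤ v) (hv1 : v < 1) :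
    IntervalIntegrable (innerIntegrand κ) volume 0 v := by
  refine intervalIntegrable_of_norm_le_mul_rpow (C := (1 - v) ^ (-(κ + 2)) * exp (-κ / v))
    (r := κ - 1) hv0 (by linarith)
    (innerIntegrand_continuousOn.mono fun u hu => ⟨hu.1, hu.2.trans_lt hv1⟩) fun u hu => ?_
  rw [norm_of_nonneg (innerIntegrand_nonneg hu.1.le (by linarith [hu.2]))]
  exact innerIntegrand_le hκ.le hu.1 hu.2 hv1

lemma hasDerivAt_innerIntegral (hκ : 0 < κ) {v : ℝ} (hv : v ∈ Ioo (0 : ℝ) 1) :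
    HasDerivAt (innerIntegral κ) (innerIntegrand κ v) v :=
  hasDerivAt_integral_of_continuousOn_Ioo innerIntegrand_continuousOn
    (innerIntegrand_intervalIntegrable hκ hv.1.le hv.2) hv

lemma innerIntegral_nonneg {v : ℝ} (hv0 : 0 ≤ v) (hv1 : v ≤ 1) : 0 ≤ innerIntegral κ v :=
  integral_nonneg hv0 fun _ hu => innerIntegrand_nonneg hu.1 (hu.2.trans hv1)

lemma innerIntegral_le (hκ : 0 < κ) {v : ℝ} (hv : v ∈ Ioo (0 : ℝ) 1) :
    innerIntegral κ v ≤ (1 - v) ^ (-(κ + 2)) * exp (-κ / v) * (v ^ κ / κ) := by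
  have hint : IntervalIntegrable (fun u => u ^ (κ - 1)) volume 0 v :=
    intervalIntegral.intervalIntegrable_rpow' (by linarith)
  calc innerIntegral κ v
      ≤ ∫ u in (0 : ℝ)..v, (1 - v) ^ (-(κ + 2)) * exp (-κ / v) * u ^ (κ - 1) :=
        integral_mono_on_of_le_Ioo hv.1.le (innerIntegrand_intervalIntegrable hκ hv.1.le hv.2)
          (hint.const_mul _) fun u hu => innerIntegrand_le hκ.le hu.1 hu.2.le hv.2
    _ = (1 - v) ^ (-(κ + 2)) * exp (-κ / v) * (v ^ κ / κ) := by
        rw [intervalIntegral.integral_const_mul, integral_rpow (Or.inl (by linarith)),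
          sub_add_cancel, zero_rpow hκ.ne']
        ring

lemma outerWeight_continuousOn : ContinuousOn (outerWeight κ) (Ioo 0 1) := by
  unfold outerWeight
  fun_prop (disch := grind)

lemma outerWeight_nonneg {v : ℝ} (hv0 : 0 ≤ v) (hv1 : v ≤ 1) : 0 ≤ outerWeight κ v := by
  have : 0 ≤ 1 - v := by linarith
  unfold outerWeight
  positivity

lemma hasDerivAt_outerWeight {v : ℝ} (hv : v ∈ Ioo (0 : ℝ) 1) :
    HasDerivAt (outerWeight κ) (-κ * outerWeight κ v / (v ^ 2 * (1 - v))) v := by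
  obtain ⟨hv0, hv1⟩ := hv
  have h1v : 0 < 1 - v := by linarith
  have hratio : HasDerivAt (fun v => (1 - v) / v) (-(v ^ 2)⁻¹) v := by
    refine (((hasDerivAt_id' v).const_sub 1).fun_div (hasDerivAt_id' v) hv0.ne').congr_deriv ?_
    field_simp
    ring
  have hexp : HasDerivAt (fun v => exp (κ / v)) (exp (κ / v) * (-κ / v ^ 2)) v := by
    refine (hasDerivAt_exp _).comp v (((hasDerivAt_id' v).fun_inv hv0.ne').const_mul κ
      |>.congr_deriv ?_)
    ring
  refine ((hratio.rpow_const (Or.inl (by positivity))).fun_mul hexp).congr_deriv ?_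
  rw [rpow_sub_one (by positivity)]
  unfold outerWeight
  field_simp
  ring

lemma outerWeight_mul_eq_inv_sq {v : ℝ} (hv : v ∈ Ioo (0 : ℝ) 1) :
    outerWeight κ v * ((1 - v) ^ (-(κ + 2)) * exp (-κ / v) * v ^ κ) = ((1 - v) ^ 2)⁻¹ := by
  obtain ⟨hv0, hv1⟩ := hv
  have h1v : 0 < 1 - v := by linarith
  unfold outerWeight
  rw [div_rpow h1v.le hv0.le, rpow_neg h1v.le, rpow_add h1v, rpow_two, neg_div, exp_neg]
  have : 0 < v ^ κ := by positivity
  have : 0 < (1 - v) ^ κ := by positivity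
  field_simp

lemma outerWeight_mul_innerIntegrand {v : ℝ} (hv : v ∈ Ioo (0 : ℝ) 1) :
    outerWeight κ v * innerIntegrand κ v = (v * (1 - v) ^ 2)⁻¹ := by
  have : innerIntegrand κ v = (1 - v) ^ (-(κ + 2)) * exp (-κ / v) * v ^ κ * v⁻¹ := by
    rw [innerIntegrand, rpow_sub_one hv.1.ne']
    ring
  rw [this, ← mul_assoc, outerWeight_mul_eq_inv_sq hv, mul_inv]
  ring

lemma outerWeight_mul_innerIntegral_le (hκ : 0 < κ) {v : ℝ} (hv : v ∈ Ioo (0 : ℝ) 1) :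
    outerWeight κ v * innerIntegral κ v ≤ ((1 - v) ^ 2)⁻¹ / κ :=
  calc outerWeight κ v * innerIntegral κ v
      ≤ outerWeight κ v * ((1 - v) ^ (-(κ + 2)) * exp (-κ / v) * (v ^ κ / κ)) :=
        mul_le_mul_of_nonneg_left (innerIntegral_le hκ hv) (outerWeight_nonneg hv.1.le hv.2.le)
    _ = ((1 - v) ^ 2)⁻¹ / κ := by
        rw [← outerWeight_mul_eq_inv_sq hv]
        ring

lemma outerIntegrand_continuousOn (hκ : 0 < κ) :
    ContinuousOn (fun v => outerWeight κ v * innerIntegral κ v) (Ioo 0 1) :=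
  outerWeight_continuousOn.mul fun _ hv =>
    (hasDerivAt_innerIntegral hκ hv).continuousAt.continuousWithinAt

lemma outerIntegrand_intervalIntegrable (hκ : 0 < κ) {t : ℝ} (ht0 : 0 ≤ t) (ht1 : t < 1) :
    IntervalIntegrable (fun v => outerWeight κ v * innerIntegral κ v) volume 0 t := by
  refine intervalIntegrable_of_norm_le_mul_rpow (C := ((1 - t) ^ 2)⁻¹ / κ) (r := 0) ht0
    (by norm_num) ((outerIntegrand_continuousOn hκ).mono fun v hv => ⟨hv.1, hv.2.trans_lt ht1⟩)
    fun v ⟨hv0, hvt⟩ => ?_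
  have hv : v ∈ Ioo (0 : ℝ) 1 := ⟨hv0, hvt.trans_lt ht1⟩
  rw [norm_of_nonneg (mul_nonneg (outerWeight_nonneg hv0.le hv.2.le)
    (innerIntegral_nonneg hv0.le hv.2.le)), rpow_zero, mul_one]
  calc outerWeight κ v * innerIntegral κ v ≤ ((1 - v) ^ 2)⁻¹ / κ :=
        outerWeight_mul_innerIntegral_le hκ hv
    _ ≤ ((1 - t) ^ 2)⁻¹ / κ := by
        have : 0 < 1 - t := by linarith
        gcongr

lemma hasDerivAt_outerIntegral (hκ : 0 < κ) {t : ℝ} (ht : t ∈ Ioo (0 : ℝ) 1) :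
    HasDerivAt (outerIntegral κ) (outerWeight κ t * innerIntegral κ t) t :=
  hasDerivAt_integral_of_continuousOn_Ioo (outerIntegrand_continuousOn hκ)
    (outerIntegrand_intervalIntegrable hκ ht.1.le ht.2) ht

lemma hasDerivAt_outerIntegrand (hκ : 0 < κ) {v : ℝ} (hv : v ∈ Ioo (0 : ℝ) 1) :
    HasDerivAt (fun v => outerWeight κ v * innerIntegral κ v)
      ((v / (1 - v) - κ * (outerWeight κ v * innerIntegral κ v)) / (v ^ 2 * (1 - v))) v := by
  refine ((hasDerivAt_outerWeight hv).fun_mul (hasDerivAt_innerIntegral hκ hv)).congr_deriv ?_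
  rw [outerWeight_mul_innerIntegrand hv]
  have : v ≠ 0 := hv.1.ne'
  have : 1 - v ≠ 0 := by linarith [hv.2]
  field_simp
  ring

end DoubleIntegralSolution

theorem stmt0_general (κ ν : ℝ) (hκ : 0 < κ)
    (y : ℝ → ℝ)
    (hy : ∀ x : ℝ, y x =
      ν * (1 + x) * ∫ v in (0:ℝ)..(x / (1 + x)),
        ((1 - v) / v) ^ κ * Real.exp (κ / v) *
          ∫ u in (0:ℝ)..v, u ^ (κ - 1) * (1 - u) ^ (-(κ + 2)) * Real.exp (-κ / u)) :
    ∀ x ∈ Set.Ioi (0:ℝ),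
      x ^ 2 * deriv (deriv y) x + κ * (1 + x) * deriv y x - κ * y x = ν * x :=
  fun _ hx => ode_of_comp_div_one_add
    (fun _ ht => DoubleIntegralSolution.hasDerivAt_outerIntegral hκ ht)
    (fun _ ht => DoubleIntegralSolution.hasDerivAt_outerIntegrand hκ ht) hy hx

/-- the explicit double-integral function `y` solves
`x² y'' + κ(1+x) y' − κ y = ν x` on `(0,∞)`. -/
theorem stmt0 (κ ν : ℝ) (hκ : 0 < κ) (hν : 0 < ν)
    (y : ℝ → ℝ)
    (hy : ∀ x : ℝ, y x =
      ν * (1 + x) * ∫ v in (0:ℝ)..(x / (1 + x)),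
        ((1 - v) / v) ^ κ * Real.exp (κ / v) *
          ∫ u in (0:ℝ)..v, u ^ (κ - 1) * (1 - u) ^ (-(κ + 2)) * Real.exp (-κ / u)) :
    ∀ x ∈ Set.Ioi (0:ℝ),
      x ^ 2 * deriv (deriv y) x + κ * (1 + x) * deriv y x - κ * y x = ν * x :=
  stmt0_general κ ν hκ y hy
end

section
/- The function z(u) = ν ∫₀^u ((1−v)/v)^κ e^{κ/v} ∫₀^v s^{κ−1}/(1−s)^{κ+2} e^{−κ/s} ds dv satisfies u²(1−u) z''(u) + κ z'(u) = ν u/(1−u) for all u ∈ (0,1). -/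
/-!
Write `z = ν ∫₀ᵘ A·F` with `A v = ((1-v)/v)^κ e^{κ/v}` and `F v = ∫₀^v f`. The weight `A` is an
integrating factor: `u²(1-u) A' = -κ A`, and `A f = 1/(u(1-u)²)`, so the equation is the product
rule for `z'' = ν (A' F + A f)`. The only analytic point is that `A F` is integrable at `0`:
bounding `e^{-κ/s}` by `e^{-κ/v}` for `s ≤ v` gives `F v ≤ v^κ e^{-κ/v} / (κ (1-v)^{κ+2})`,
hence `A F ≤ 1/(κ (1-v)²)`.
-/

open Real Set intervalIntegral MeasureTheory Filter Topology

theorem IntervalIntegrable.of_norm_le_on_Ioc {E : Type*} [NormedAddCommGroup E] {f : ℝ → E}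
    {g : ℝ → ℝ} {μ : Measure ℝ} {a b : ℝ} (hab : a ≤ b) (hg : IntervalIntegrable g μ a b)
    (hfm : AEStronglyMeasurable f (μ.restrict (Ioc a b))) (hle : ∀ x ∈ Ioc a b, ‖f x‖ ≤ g x) :
    IntervalIntegrable f μ a b := by
  rw [← uIoc_of_le hab] at hfm hle
  exact hg.mono_fun' hfm ((ae_restrict_iff' measurableSet_uIoc).2 (.of_forall hle))

noncomputable def innerIntegrand (κ s : ℝ) : ℝ := s ^ (κ - 1) * (1 - s) ^ (-(κ + 2)) * exp (-κ / s)

noncomputable def innerIntegral (κ v : ℝ) : ℝ := ∫ s in (0:ℝ)..v, innerIntegrand κ s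

noncomputable def integratingFactor (κ v : ℝ) : ℝ := ((1 - v) / v) ^ κ * exp (κ / v)

noncomputable def outerIntegrand (κ v : ℝ) : ℝ := integratingFactor κ v * innerIntegral κ v

section

variable {κ u v : ℝ}

lemma innerIntegrand_nonneg (κ : ℝ) {s : ℝ} (hs : 0 ≤ s) (hs1 : s ≤ 1) :
    0 ≤ innerIntegrand κ s := by
  have : 0 ≤ 1 - s := by linarith
  unfold innerIntegrand
  positivity

lemma measurable_innerIntegrand (κ : ℝ) : Measurable (innerIntegrand κ) := by
  unfold innerIntegrand
  fun_prop

lemma continuousAt_innerIntegrand (κ : ℝ) {s : ℝ} (hs : 0 < s) (hs1 : s < 1) :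
    ContinuousAt (innerIntegrand κ) s := by
  have : 1 - s ≠ 0 := by linarith
  unfold innerIntegrand
  fun_prop (disch := first | exact Or.inl hs.ne' | exact Or.inl this | exact hs.ne')

lemma innerIntegrand_le (hκ : 0 ≤ κ) {s : ℝ} (hs : 0 < s) (hsv : s ≤ v) (hv1 : v < 1) :
    innerIntegrand κ s ≤ (1 - v) ^ (-(κ + 2)) * exp (-κ / v) * s ^ (κ - 1) := by
  have h1 : (1 - s) ^ (-(κ + 2)) ≤ (1 - v) ^ (-(κ + 2)) :=
    rpow_le_rpow_of_nonpos (by linarith) (by linarith) (by linarith)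
  have h2 : exp (-κ / s) ≤ exp (-κ / v) := by
    rw [exp_le_exp, neg_div, neg_div, neg_le_neg_iff]
    exact div_le_div_of_nonneg_left hκ hs hsv
  rw [innerIntegrand, mul_comm _ (s ^ (κ - 1)), mul_assoc]
  gcongr

lemma intervalIntegrable_innerIntegrand (hκ : 0 < κ) (hv0 : 0 ≤ v) (hv1 : v < 1) :
    IntervalIntegrable (innerIntegrand κ) volume 0 v := by
  refine IntervalIntegrable.of_norm_le_on_Ioc hv0
    ((intervalIntegral.intervalIntegrable_rpow' (by linarith : -1 < κ - 1)).const_mul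
      ((1 - v) ^ (-(κ + 2)) * exp (-κ / v)))
    (measurable_innerIntegrand κ).aestronglyMeasurable fun s hs => ?_
  rw [norm_of_nonneg (innerIntegrand_nonneg κ hs.1.le (by linarith [hs.2]))]
  exact innerIntegrand_le hκ.le hs.1 hs.2 hv1

lemma innerIntegral_nonneg (κ : ℝ) (hv0 : 0 ≤ v) (hv1 : v ≤ 1) : 0 ≤ innerIntegral κ v :=
  integral_nonneg hv0 fun _ hs => innerIntegrand_nonneg κ hs.1 (hs.2.trans hv1)

lemma innerIntegral_le (hκ : 0 < κ) (hv0 : 0 < v) (hv1 : v < 1) :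
    innerIntegral κ v ≤ (1 - v) ^ (-(κ + 2)) * exp (-κ / v) * (v ^ κ / κ) := by
  set C := (1 - v) ^ (-(κ + 2)) * exp (-κ / v)
  calc innerIntegral κ v ≤ ∫ s in (0:ℝ)..v, C * s ^ (κ - 1) :=
        integral_mono_on_of_le_Ioo hv0.le (intervalIntegrable_innerIntegrand hκ hv0.le hv1)
          ((intervalIntegral.intervalIntegrable_rpow' (by linarith)).const_mul C)
          fun s hs => innerIntegrand_le hκ.le hs.1 hs.2.le hv1
    _ = C * (v ^ κ / κ) := by
        rw [intervalIntegral.integral_const_mul, integral_rpow (Or.inl (by linarith)),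
          sub_add_cancel, zero_rpow hκ.ne', sub_zero]

lemma integratingFactor_pos (κ : ℝ) (hv0 : 0 < v) (hv1 : v < 1) : 0 < integratingFactor κ v := by
  have : 0 < (1 - v) / v := div_pos (by linarith) hv0
  unfold integratingFactor
  positivity

lemma integratingFactor_mul_innerIntegral_bound (hκ : 0 < κ) (hv0 : 0 < v) (hv1 : v < 1) :
    integratingFactor κ v * ((1 - v) ^ (-(κ + 2)) * exp (-κ / v) * (v ^ κ / κ)) =
      1 / (κ * (1 - v) ^ 2) := by
  have h1v : 0 < 1 - v := by linarith
  rw [integratingFactor, div_rpow h1v.le hv0.le, neg_add, rpow_add h1v, rpow_neg h1v.le,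
    rpow_neg h1v.le, rpow_two, neg_div, exp_neg]
  have := exp_pos (κ / v)
  have := rpow_pos_of_pos h1v κ
  have := rpow_pos_of_pos hv0 κ
  field_simp

lemma outerIntegrand_nonneg (κ : ℝ) (hv0 : 0 < v) (hv1 : v < 1) : 0 ≤ outerIntegrand κ v :=
  mul_nonneg (integratingFactor_pos κ hv0 hv1).le (innerIntegral_nonneg κ hv0.le hv1.le)

lemma outerIntegrand_le (hκ : 0 < κ) (hv0 : 0 < v) (hvu : v ≤ u) (hu1 : u < 1) :
    outerIntegrand κ v ≤ 1 / (κ * (1 - u) ^ 2) := by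
  have hv1 : v < 1 := hvu.trans_lt hu1
  calc outerIntegrand κ v
      ≤ integratingFactor κ v * ((1 - v) ^ (-(κ + 2)) * exp (-κ / v) * (v ^ κ / κ)) :=
        mul_le_mul_of_nonneg_left (innerIntegral_le hκ hv0 hv1)
          (integratingFactor_pos κ hv0 hv1).le
    _ = 1 / (κ * (1 - v) ^ 2) := integratingFactor_mul_innerIntegral_bound hκ hv0 hv1
    _ ≤ 1 / (κ * (1 - u) ^ 2) := by
        gcongr

lemma integratingFactor_hasDerivAt (κ : ℝ) (hu0 : 0 < u) (hu1 : u < 1) :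
    HasDerivAt (integratingFactor κ) (-κ / (u ^ 2 * (1 - u)) * integratingFactor κ u) u := by
  have h1u : 1 - u ≠ 0 := by linarith
  have hq : 0 < (1 - u) / u := div_pos (by linarith) hu0
  have hquot : HasDerivAt (fun v => (1 - v) / v) (-1 / u ^ 2) u :=
    (((hasDerivAt_id' u).const_sub 1).fun_div (hasDerivAt_id' u) hu0.ne').congr_deriv
      (by ring)
  have hexp : HasDerivAt (fun v => exp (κ / v)) (exp (κ / u) * (-κ / u ^ 2)) u :=
    ((hasDerivAt_const u κ).fun_div (hasDerivAt_id' u) hu0.ne').exp.congr_deriv (by ring)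
  refine ((hquot.rpow_const (Or.inl hq.ne')).mul hexp).congr_deriv ?_
  rw [integratingFactor, rpow_sub_one hq.ne']
  field_simp
  ring

lemma integratingFactor_mul_innerIntegrand (κ : ℝ) (hu0 : 0 < u) (hu1 : u < 1) :
    integratingFactor κ u * innerIntegrand κ u = 1 / (u * (1 - u) ^ 2) := by
  have h1u : 0 < 1 - u := by linarith
  rw [integratingFactor, innerIntegrand, div_rpow h1u.le hu0.le, rpow_sub_one hu0.ne', neg_add,
    rpow_add h1u, rpow_neg h1u.le, rpow_neg h1u.le, rpow_two, neg_div, exp_neg]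
  have := exp_pos (κ / u)
  have := rpow_pos_of_pos h1u κ
  have := rpow_pos_of_pos hu0 κ
  field_simp

lemma innerIntegral_hasDerivAt (hκ : 0 < κ) (hu0 : 0 < u) (hu1 : u < 1) :
    HasDerivAt (innerIntegral κ) (innerIntegrand κ u) u :=
  integral_hasDerivAt_right (intervalIntegrable_innerIntegrand hκ hu0.le hu1)
    (measurable_innerIntegrand κ).stronglyMeasurable.stronglyMeasurableAtFilter
    (continuousAt_innerIntegrand κ hu0 hu1)

lemma outerIntegrand_hasDerivAt (hκ : 0 < κ) (hu0 : 0 < u) (hu1 : u < 1) :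
    HasDerivAt (outerIntegrand κ)
      (-κ / (u ^ 2 * (1 - u)) * outerIntegrand κ u + 1 / (u * (1 - u) ^ 2)) u := by
  refine ((integratingFactor_hasDerivAt κ hu0 hu1).mul
    (innerIntegral_hasDerivAt hκ hu0 hu1)).congr_deriv ?_
  rw [← integratingFactor_mul_innerIntegrand κ hu0 hu1, outerIntegrand]
  ring

lemma continuousOn_outerIntegrand (hκ : 0 < κ) : ContinuousOn (outerIntegrand κ) (Ioo 0 1) :=
  fun _ hv => (outerIntegrand_hasDerivAt hκ hv.1 hv.2).continuousAt.continuousWithinAt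

lemma intervalIntegrable_outerIntegrand (hκ : 0 < κ) (hu0 : 0 ≤ u) (hu1 : u < 1) :
    IntervalIntegrable (outerIntegrand κ) volume 0 u :=
  IntervalIntegrable.of_norm_le_on_Ioc hu0 intervalIntegrable_const
    (((continuousOn_outerIntegrand hκ).mono fun _ hv => ⟨hv.1, hv.2.trans_lt hu1⟩)
      |>.aestronglyMeasurable measurableSet_Ioc)
    fun v hv => by
      rw [norm_of_nonneg (outerIntegrand_nonneg κ hv.1 (hv.2.trans_lt hu1))]
      exact outerIntegrand_le hκ hv.1 hv.2 hu1

lemma hasDerivAt_integral_outerIntegrand (hκ : 0 < κ) (hu0 : 0 < u) (hu1 : u < 1) :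
    HasDerivAt (fun u => ∫ v in (0:ℝ)..u, outerIntegrand κ v) (outerIntegrand κ u) u :=
  integral_hasDerivAt_right (intervalIntegrable_outerIntegrand hκ hu0.le hu1)
    ((continuousOn_outerIntegrand hκ).stronglyMeasurableAtFilter isOpen_Ioo u ⟨hu0, hu1⟩)
    ((outerIntegrand_hasDerivAt hκ hu0 hu1).continuousAt)

end

theorem stmt2_general (κ ν : ℝ) (hκ : 0 < κ)
    (z : ℝ → ℝ)
    (hz : ∀ u : ℝ, z u =
      ν * ∫ v in (0:ℝ)..u,
        ((1 - v) / v) ^ κ * Real.exp (κ / v) *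
          ∫ s in (0:ℝ)..v, s ^ (κ - 1) * (1 - s) ^ (-(κ + 2)) * Real.exp (-κ / s)) :
    ∀ u ∈ Set.Ioo (0:ℝ) 1,
      u ^ 2 * (1 - u) * deriv (deriv z) u + κ * deriv z u = ν * u / (1 - u) := by
  have hz_eq : z = fun u => ν * ∫ v in (0:ℝ)..u, outerIntegrand κ v := funext hz
  have hz' : EqOn (deriv z) (fun v => ν * outerIntegrand κ v) (Ioo 0 1) := fun v hv => by
    rw [hz_eq]
    exact ((hasDerivAt_integral_outerIntegrand hκ hv.1 hv.2).const_mul ν).deriv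
  intro u hu
  have hz'' : deriv (deriv z) u =
      ν * (-κ / (u ^ 2 * (1 - u)) * outerIntegrand κ u + 1 / (u * (1 - u) ^ 2)) := by
    rw [(eventuallyEq_of_mem (isOpen_Ioo.mem_nhds hu) hz').deriv_eq]
    exact ((outerIntegrand_hasDerivAt hκ hu.1 hu.2).const_mul ν).deriv
  have : 1 - u ≠ 0 := by linarith [hu.2]
  have := hu.1.ne'
  rw [hz'', hz' hu]
  field_simp
  ring

/-- the explicit function `z` solves
`u²(1−u) z'' + κ z' = ν u/(1−u)` on `(0,1)`. -/
theorem stmt2 (κ ν : ℝ) (hκ : 0 < κ) (hν : 0 < ν)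
    (z : ℝ → ℝ)
    (hz : ∀ u : ℝ, z u =
      ν * ∫ v in (0:ℝ)..u,
        ((1 - v) / v) ^ κ * Real.exp (κ / v) *
          ∫ s in (0:ℝ)..v, s ^ (κ - 1) * (1 - s) ^ (-(κ + 2)) * Real.exp (-κ / s)) :
    ∀ u ∈ Set.Ioo (0:ℝ) 1,
      u ^ 2 * (1 - u) * deriv (deriv z) u + κ * deriv z u = ν * u / (1 - u) :=
  stmt2_general κ ν hκ z hz
end

section
/- There exists a unique φ* ∈ (λ/c, ∞) such that (e^{κ(1+φ*)/φ*}/φ*^κ) · ∫₀^{φ*/(1+φ*)} u^{κ−1}/(1−u)^{κ+2} e^{−κ/u} du = μ²/(2c). -/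
/-!
The substitution `u = t / (1 + t)` turns the integral into `exp (-κ) * G κ φ`, where
`G κ φ = ∫₀^φ (1 + t) / t * g κ t` and `g κ t = t ^ κ * exp (-κ / t)`, so the equation reads
`F κ φ = G κ φ / g κ φ = μ² / (2c)`. Since `g' = κ (1 + t) / t² * g`, the integrand of `G` is
`t g'(t) / κ`, and integration by parts gives `κ G(φ) = φ g(φ) - ∫₀^φ g`. Together with
`0 < ∫₀^φ g ≤ G(φ)` this yields `φ / (κ + 1) ≤ F(φ) < φ / κ`, and the inequality `κ G < φ g`
is also exactly what makes `F' > 0`. Hence `F` is a strictly increasing continuous map of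
`(0, ∞)` onto itself, and its solution `φ` of `F φ = μ² / (2c)` satisfies
`μ² / (2c) < φ / κ`, i.e. `λ / c < φ`.
-/

open Real Set intervalIntegral Filter Topology MeasureTheory

namespace ThresholdEquation

theorem tendsto_rpow_mul_exp_neg_div_nhdsGT_zero (a : ℝ) {k : ℝ} (hk : 0 < k) :
    Tendsto (fun t : ℝ => t ^ a * exp (-k / t)) (𝓝[>] 0) (𝓝 0) := by
  refine ((tendsto_rpow_mul_exp_neg_mul_atTop_nhds_zero (-a) k hk).comp
    tendsto_inv_nhdsGT_zero).congr' ?_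
  filter_upwards [self_mem_nhdsWithin] with t (ht : 0 < t)
  simp only [Function.comp, inv_rpow ht.le, ← rpow_neg ht.le, neg_neg]
  ring_nf

theorem continuousOn_Ici_zero_of_tendsto {f : ℝ → ℝ} (h0 : Tendsto f (𝓝[>] 0) (𝓝 (f 0)))
    (hpos : ∀ x, 0 < x → ContinuousAt f x) : ContinuousOn f (Ici 0) := by
  intro x hx
  rcases (mem_Ici.1 hx).eq_or_lt with rfl | hx
  · exact continuousWithinAt_Ioi_iff_Ici.1 h0
  · exact (hpos x hx).continuousWithinAt

noncomputable def g (k t : ℝ) : ℝ := t ^ k * exp (-k / t)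

-- The junk value `1 / 0 = 0` makes `W k 0 = 0`, the continuous extension at `0`.
noncomputable def W (k t : ℝ) : ℝ := (1 + t) / t * g k t

noncomputable def G (k φ : ℝ) : ℝ := ∫ t in 0..φ, W k t

noncomputable def F (k φ : ℝ) : ℝ := G k φ / g k φ

variable {k : ℝ}

theorem g_pos {t : ℝ} (ht : 0 < t) : 0 < g k t := by unfold g; positivity

theorem g_zero (hk : k ≠ 0) : g k 0 = 0 := by simp [g, zero_rpow hk]

theorem hasDerivAt_g {t : ℝ} (ht : 0 < t) :
    HasDerivAt (g k) (k * (1 + t) / t ^ 2 * g k t) t := by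
  have hexp : HasDerivAt (fun t => exp (-k / t)) (k / t ^ 2 * exp (-k / t)) t := by
    convert ((hasDerivAt_inv ht.ne').const_mul (-k)).exp using 1 <;> simp only [div_eq_mul_inv]
    ring
  refine ((hasDerivAt_rpow_const (p := k) (Or.inl ht.ne')).mul hexp).congr_deriv ?_
  rw [rpow_sub_one ht.ne', g]
  field_simp
  ring

theorem continuousOn_g (hk : 0 < k) : ContinuousOn (g k) (Ici 0) := by
  refine continuousOn_Ici_zero_of_tendsto ?_ fun t ht => (hasDerivAt_g ht).continuousAt
  rw [g_zero hk.ne']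
  exact tendsto_rpow_mul_exp_neg_div_nhdsGT_zero k hk

theorem continuousOn_W (hk : 0 < k) : ContinuousOn (W k) (Ici 0) := by
  refine continuousOn_Ici_zero_of_tendsto ?_ fun t ht => ?_
  · have h1 : Tendsto (fun t : ℝ => 1 + t) (𝓝[>] 0) (𝓝 1) :=
      ((continuous_const.add continuous_id).tendsto' (0 : ℝ) 1 (by simp)).mono_left
        nhdsWithin_le_nhds
    have h := h1.mul (tendsto_rpow_mul_exp_neg_div_nhdsGT_zero (k - 1) hk)
    rw [mul_zero] at h
    simp only [W, add_zero, div_zero, zero_mul]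
    refine h.congr' ?_
    filter_upwards [self_mem_nhdsWithin] with t (ht : 0 < t)
    rw [W, g, rpow_sub_one ht.ne']
    field_simp
  · exact ((continuousAt_const.add continuousAt_id).div continuousAt_id ht.ne').mul
      (hasDerivAt_g ht).continuousAt

theorem intervalIntegrable_g (hk : 0 < k) {φ : ℝ} (hφ : 0 ≤ φ) :
    IntervalIntegrable (g k) volume 0 φ :=
  ((continuousOn_g hk).mono Icc_subset_Ici_self).intervalIntegrable_of_Icc hφ

theorem intervalIntegrable_W (hk : 0 < k) {φ : ℝ} (hφ : 0 ≤ φ) :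
    IntervalIntegrable (W k) volume 0 φ :=
  ((continuousOn_W hk).mono Icc_subset_Ici_self).intervalIntegrable_of_Icc hφ

theorem hasDerivAt_G (hk : 0 < k) {φ : ℝ} (hφ : 0 < φ) : HasDerivAt (G k) (W k φ) φ :=
  integral_hasDerivAt_right (intervalIntegrable_W hk hφ.le)
    (((continuousOn_W hk).mono Ioi_subset_Ici_self).stronglyMeasurableAtFilter isOpen_Ioi φ hφ)
    ((continuousOn_W hk).continuousAt (Ici_mem_nhds hφ))

theorem continuousOn_G (hk : 0 < k) {φ : ℝ} (hφ : 0 ≤ φ) : ContinuousOn (G k) (Icc 0 φ) := by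
  have h := (intervalIntegrable_iff_integrableOn_Icc_of_le hφ).1 (intervalIntegrable_W hk hφ)
  rw [← uIcc_of_le hφ] at h ⊢
  exact continuousOn_primitive_interval h

theorem integral_g_eq (hk : 0 < k) {φ : ℝ} (hφ : 0 ≤ φ) :
    ∫ t in 0..φ, g k t = φ * g k φ - k * G k φ := by
  have hderiv : ∀ x ∈ Ioo 0 φ, HasDerivAt (fun x => x * g k x - k * G k x) (g k x) x := by
    intro x hx
    refine ((hasDerivAt_id x).mul (hasDerivAt_g hx.1)).sub
      ((hasDerivAt_G hk hx.1).const_mul k) |>.congr_deriv ?_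
    rw [W, id]
    field_simp
    ring
  rw [integral_eq_sub_of_hasDerivAt_of_le hφ
    ((continuousOn_id.mul ((continuousOn_g hk).mono Icc_subset_Ici_self)).sub
      (continuousOn_const.mul (continuousOn_G hk hφ))) hderiv
    (intervalIntegrable_g hk hφ)]
  simp [G, g_zero hk.ne']

theorem k_mul_G_lt (hk : 0 < k) {φ : ℝ} (hφ : 0 < φ) : k * G k φ < φ * g k φ := by
  have hpos : 0 < ∫ t in 0..φ, g k t :=
    intervalIntegral_pos_of_pos_on (intervalIntegrable_g hk hφ.le)
      (fun t ht => g_pos ht.1) hφ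
  linarith [integral_g_eq hk hφ.le]

theorem mul_g_le_G (hk : 0 < k) {φ : ℝ} (hφ : 0 ≤ φ) : φ * g k φ ≤ (k + 1) * G k φ := by
  have hle : ∫ t in 0..φ, g k t ≤ G k φ := by
    refine integral_mono_on_of_le_Ioo hφ (intervalIntegrable_g hk hφ)
      (intervalIntegrable_W hk hφ) fun t ht => ?_
    exact le_mul_of_one_le_left (g_pos ht.1).le ((one_le_div ht.1).2 (by linarith))
  linarith [integral_g_eq hk hφ]

theorem F_lt_div (hk : 0 < k) {φ : ℝ} (hφ : 0 < φ) : F k φ < φ / k := by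
  rw [F, div_lt_div_iff₀ (g_pos hφ) hk]
  linarith [k_mul_G_lt hk hφ]

theorem div_le_F (hk : 0 < k) {φ : ℝ} (hφ : 0 < φ) : φ / (k + 1) ≤ F k φ := by
  rw [F, div_le_div_iff₀ (by linarith) (g_pos hφ)]
  linarith [mul_g_le_G hk hφ.le]

theorem hasDerivAt_F (hk : 0 < k) {φ : ℝ} (hφ : 0 < φ) :
    HasDerivAt (F k) ((1 + φ) * g k φ / φ ^ 2 * (φ * g k φ - k * G k φ) / g k φ ^ 2) φ := by
  refine ((hasDerivAt_G hk hφ).div (hasDerivAt_g hφ) (g_pos hφ).ne').congr_deriv ?_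
  rw [W]
  field_simp

theorem strictMonoOn_F (hk : 0 < k) : StrictMonoOn (F k) (Ioi 0) := by
  refine strictMonoOn_of_hasDerivWithinAt_pos (convex_Ioi 0)
    (fun φ hφ => (hasDerivAt_F hk hφ).continuousAt.continuousWithinAt)
    (fun φ hφ => (hasDerivAt_F hk (interior_subset hφ)).hasDerivWithinAt) fun φ hφ => ?_
  replace hφ : 0 < φ := by rwa [interior_Ioi] at hφ
  have hg := g_pos (k := k) hφ
  have h1 : 0 < 1 + φ := by linarith
  exact div_pos (mul_pos (by positivity) (sub_pos.2 (k_mul_G_lt hk hφ))) (by positivity)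

theorem existsUnique_F_eq (hk : 0 < k) {m : ℝ} (hm : 0 < m) : ∃! φ, 0 < φ ∧ F k φ = m := by
  have hkm : 0 < k * m := mul_pos hk hm
  have hlo : F k (k * m) ≤ m := by
    simpa [mul_div_cancel_left₀ m hk.ne'] using (F_lt_div hk hkm).le
  have hhi : m ≤ F k ((k + 1) * m) := by
    simpa [mul_div_cancel_left₀ m (by linarith : k + 1 ≠ 0)] using
      div_le_F hk (by positivity : 0 < (k + 1) * m)
  have hcont : ContinuousOn (F k) (Icc (k * m) ((k + 1) * m)) := fun φ hφ =>
    (hasDerivAt_F hk (hkm.trans_le hφ.1)).continuousAt.continuousWithinAt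
  obtain ⟨φ, hφ, hFφ⟩ := intermediate_value_Icc (by nlinarith) hcont ⟨hlo, hhi⟩
  refine ⟨φ, ⟨hkm.trans_le hφ.1, hFφ⟩, fun ψ hψ => ?_⟩
  exact (strictMonoOn_F hk).injOn hψ.1 (hkm.trans_le hφ.1) (hψ.2.trans hFφ.symm)

theorem mul_lt_of_F_eq (hk : 0 < k) {φ m : ℝ} (hφ : 0 < φ) (hF : F k φ = m) : k * m < φ := by
  have := F_lt_div hk hφ
  rwa [hF, lt_div_iff₀ hk, mul_comm] at this

theorem image_div_one_add_Ioc {φ : ℝ} (hφ : -1 < φ) :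
    (fun t => t / (1 + t)) '' Ioc 0 φ = Ioc 0 (φ / (1 + φ)) := by
  have h1φ : 0 < 1 + φ := by linarith
  ext u
  constructor
  · rintro ⟨t, ⟨ht, htφ⟩, rfl⟩
    refine ⟨by positivity, ?_⟩
    rw [div_le_div_iff₀ (by linarith) h1φ]
    nlinarith
  · rintro ⟨hu, huφ⟩
    have hu1 : u < 1 := huφ.trans_lt ((div_lt_one h1φ).2 (by linarith))
    refine ⟨u / (1 - u), ⟨div_pos hu (by linarith), ?_⟩, ?_⟩
    · rw [le_div_iff₀ h1φ] at huφ
      rw [div_le_iff₀ (by linarith)]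
      linarith
    · have : 1 - u ≠ 0 := by linarith
      field_simp
      ring

theorem integrand_comp_div_one_add {t : ℝ} (ht : 0 < t) :
    |((1 + t) ^ 2)⁻¹| • ((t / (1 + t)) ^ (k - 1) * (1 - t / (1 + t)) ^ (-(k + 2)) *
      exp (-k / (t / (1 + t)))) = exp (-k) * W k t := by
  have h1t : 0 < 1 + t := by linarith
  have hsub : 1 - t / (1 + t) = (1 + t)⁻¹ := by field_simp; ring
  have hexp : -k / (t / (1 + t)) = -k + -k / t := by field_simp; ring
  rw [hsub, hexp, exp_add, inv_rpow h1t.le, ← rpow_neg h1t.le, neg_neg, rpow_add h1t,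
    div_rpow ht.le h1t.le, rpow_sub_one ht.ne', rpow_sub_one h1t.ne', rpow_two,
    abs_of_pos (by positivity), smul_eq_mul, W, g]
  have : (1 + t) ^ k ≠ 0 := (rpow_pos_of_pos h1t k).ne'
  field_simp

theorem integral_eq_exp_neg_mul_G {φ : ℝ} (hφ : 0 ≤ φ) :
    ∫ u in 0..φ / (1 + φ), u ^ (k - 1) * (1 - u) ^ (-(k + 2)) * exp (-k / u) =
      exp (-k) * G k φ := by
  have h1φ : 0 < 1 + φ := by linarith
  have hderiv : ∀ t ∈ Ioc 0 φ,
      HasDerivWithinAt (fun t => t / (1 + t)) ((1 + t) ^ 2)⁻¹ (Ioc 0 φ) t := fun t ht => by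
    have h1t : 1 + t ≠ 0 := by linarith [ht.1]
    refine ((hasDerivAt_id t).div ((hasDerivAt_id t).const_add 1) h1t).hasDerivWithinAt
      |>.congr_deriv ?_
    simp only [id]
    field_simp
    ring
  have hinj : InjOn (fun t => t / (1 + t)) (Ioc 0 φ) := fun a ha b hb hab => by
    have : 1 + a ≠ 0 := by linarith [ha.1]
    have : 1 + b ≠ 0 := by linarith [hb.1]
    field_simp at hab
    linarith
  rw [integral_of_le (by positivity), ← image_div_one_add_Ioc (by linarith),
    integral_image_eq_integral_abs_deriv_smul measurableSet_Ioc hderiv hinj, G,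
    integral_of_le hφ, ← MeasureTheory.integral_const_mul]
  exact setIntegral_congr_fun measurableSet_Ioc fun t ht => integrand_comp_div_one_add ht.1

theorem exp_div_rpow_mul_integral_eq_F {φ : ℝ} (hφ : 0 < φ) :
    exp (k * (1 + φ) / φ) / φ ^ k *
      ∫ u in 0..φ / (1 + φ), u ^ (k - 1) * (1 - u) ^ (-(k + 2)) * exp (-k / u) = F k φ := by
  have hexp : k * (1 + φ) / φ = k + k / φ := by field_simp; ring
  rw [integral_eq_exp_neg_mul_G hφ.le, F, g, hexp, exp_add, neg_div, exp_neg, exp_neg]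
  have := (rpow_pos_of_pos hφ k).ne'
  field_simp

end ThresholdEquation

open ThresholdEquation in
/-- existence and uniqueness of `φ* ∈ (λ/c, ∞)` solving the
transcendental equation; in fact the equation has exactly one solution on
`(0,∞)` and it lies in `(λ/c, ∞)`. -/
theorem stmt3 (lam μ c : ℝ) (hlam : 0 < lam) (hμ : μ ≠ 0) (hc : 0 < c)
    (κ : ℝ) (hκ : κ = 2 * lam / μ ^ 2)
    (E : ℝ → Prop)
    (hE : ∀ φ : ℝ, E φ ↔
      Real.exp (κ * (1 + φ) / φ) / φ ^ κ *
        ∫ u in (0:ℝ)..(φ / (1 + φ)),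
          u ^ (κ - 1) * (1 - u) ^ (-(κ + 2)) * Real.exp (-κ / u)
      = μ ^ 2 / (2 * c)) :
    (∃! φ : ℝ, 0 < φ ∧ E φ) ∧ (∀ φ : ℝ, 0 < φ → E φ → lam / c < φ) := by
  have hκ0 : 0 < κ := by rw [hκ]; positivity
  have hκm : κ * (μ ^ 2 / (2 * c)) = lam / c := by rw [hκ]; field_simp
  have hEF : ∀ φ, 0 < φ → (E φ ↔ F κ φ = μ ^ 2 / (2 * c)) := fun φ hφ => by
    rw [hE, exp_div_rpow_mul_integral_eq_F hφ]
  obtain ⟨φ, ⟨hφ, hFφ⟩, huniq⟩ := existsUnique_F_eq hκ0 (by positivity : 0 < μ ^ 2 / (2 * c))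
  refine ⟨⟨φ, ⟨hφ, (hEF φ hφ).2 hFφ⟩, fun ψ ⟨hψ, hEψ⟩ => huniq ψ ⟨hψ, (hEF ψ hψ).1 hEψ⟩⟩, ?_⟩
  intro ψ hψ hEψ
  exact hκm ▸ mul_lt_of_F_eq hκ0 hψ ((hEF ψ hψ).1 hEψ)
end

section
/- With F(φ) = ∫₀^{φ/(1+φ)} (1/(u(1−u)²)) e^{κ(log(u/(1−u)) − 1/u)} du and G(φ) = (μ²/(2c)) e^{κ(log φ − (1+φ)/φ)}, for every φ ∈ (0,∞) one has F'(φ) < G'(φ) if and only if φ < λ/c, and F'(φ) > G'(φ) if and only if φ > λ/c. -/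
/-!
Substituting `u = φ/(1+φ)` gives `u/(1-u) = φ` and `1/u = (1+φ)/φ`, so by the fundamental theorem
of calculus `F'(φ)` and `G'(φ)` are multiples of the same positive quantity
`P = (1+φ) e^{κ(log φ - (1+φ)/φ)} / φ²`: namely `F'(φ) = φ P` and `G'(φ) = (λ/c) P`.
The integrand is integrable at `0` because `u⁻¹ e^{-κ/u} ≤ κ⁻¹`.
-/

open Real Set intervalIntegral MeasureTheory

noncomputable def integrandF (κ u : ℝ) : ℝ :=
  1 / (u * (1 - u) ^ 2) * exp (κ * (log (u / (1 - u)) - 1 / u))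

lemma inv_mul_exp_neg_div_le {κ u : ℝ} (hκ : 0 < κ) (hu : 0 < u) :
    u⁻¹ * exp (-(κ / u)) ≤ κ⁻¹ := by
  have hle : κ / u ≤ exp (κ / u) := by linarith [add_one_le_exp (κ / u)]
  rw [exp_neg, ← mul_inv, inv_le_inv₀ (by positivity) hκ]
  linarith [(div_le_iff₀ hu).1 hle]

lemma measurable_integrandF (κ : ℝ) : Measurable (integrandF κ) := by
  unfold integrandF; fun_prop

lemma integrandF_nonneg (κ : ℝ) {u : ℝ} (hu : 0 ≤ u) : 0 ≤ integrandF κ u := by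
  unfold integrandF; positivity

lemma integrandF_eq_mul {κ u : ℝ} (hu0 : 0 < u) (hu1 : u < 1) :
    integrandF κ u =
      exp (κ * log (u / (1 - u))) * (1 / (1 - u) ^ 2) * (u⁻¹ * exp (-(κ / u))) := by
  have : 1 - u ≠ 0 := by linarith
  rw [integrandF, mul_sub, exp_sub, exp_neg, mul_one_div κ u]
  field_simp

lemma integrandF_le {κ b u : ℝ} (hκ : 0 < κ) (hb : b < 1) (hu : u ∈ Ioc 0 b) :
    integrandF κ u ≤ exp (κ * log (b / (1 - b))) * (1 / (1 - b) ^ 2) * κ⁻¹ := by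
  obtain ⟨hu0, hub⟩ := hu
  have h1b : 0 < 1 - b := by linarith
  have h1u : 0 < 1 - u := by linarith
  have hratio : u / (1 - u) ≤ b / (1 - b) := by
    rw [div_le_div_iff₀ h1u h1b]; nlinarith
  have hsq : 1 / (1 - u) ^ 2 ≤ 1 / (1 - b) ^ 2 :=
    one_div_le_one_div_of_le (by positivity) (by nlinarith)
  rw [integrandF_eq_mul hu0 (hub.trans_lt hb)]
  gcongr
  exact inv_mul_exp_neg_div_le hκ hu0

lemma intervalIntegrable_integrandF {κ b : ℝ} (hκ : 0 < κ) (hb0 : 0 ≤ b) (hb1 : b < 1) :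
    IntervalIntegrable (integrandF κ) volume 0 b := by
  rw [intervalIntegrable_iff, uIoc_of_le hb0]
  have hbound : ∀ᵐ u ∂volume.restrict (Ioc 0 b),
      ‖integrandF κ u‖ ≤ exp (κ * log (b / (1 - b))) * (1 / (1 - b) ^ 2) * κ⁻¹ :=
    (ae_restrict_iff' measurableSet_Ioc).2 <| .of_forall fun u hu => by
      rw [norm_of_nonneg (integrandF_nonneg κ hu.1.le)]
      exact integrandF_le hκ hb1 hu
  exact Measure.integrableOn_of_bounded measure_Ioc_lt_top.ne
    (measurable_integrandF κ).aestronglyMeasurable hbound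

lemma continuousAt_integrandF (κ : ℝ) {u : ℝ} (hu0 : 0 < u) (hu1 : u < 1) :
    ContinuousAt (integrandF κ) u := by
  have h1u : 1 - u ≠ 0 := by linarith
  unfold integrandF
  fun_prop (disch := first | positivity | exact h1u | exact div_ne_zero hu0.ne' h1u)

lemma integrandF_div_one_add (κ : ℝ) {φ : ℝ} (hφ : 0 < φ) :
    integrandF κ (φ / (1 + φ)) = (1 + φ) ^ 3 / φ * exp (κ * (log φ - (1 + φ) / φ)) := by
  have h1φ : 1 + φ ≠ 0 := by positivity
  have h1b : 1 - φ / (1 + φ) = 1 / (1 + φ) := by field_simp; ring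
  rw [integrandF, h1b, div_div_div_cancel_right₀ h1φ, one_div_div]
  field_simp

theorem hasDerivAt_integral_integrandF {κ φ : ℝ} (hκ : 0 < κ) (hφ : 0 < φ) :
    HasDerivAt (fun x => ∫ u in (0 : ℝ)..x / (1 + x), integrandF κ u)
      ((1 + φ) / φ * exp (κ * (log φ - (1 + φ) / φ))) φ := by
  have h1φ : 0 < 1 + φ := by positivity
  have hb0 : 0 < φ / (1 + φ) := by positivity
  have hb1 : φ / (1 + φ) < 1 := by rw [div_lt_one h1φ]; linarith
  have hFTC := integral_hasDerivAt_right (intervalIntegrable_integrandF hκ hb0.le hb1)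
    (measurable_integrandF κ).stronglyMeasurable.stronglyMeasurableAtFilter
    (continuousAt_integrandF κ hb0 hb1)
  have hsubst : HasDerivAt (fun x : ℝ => x / (1 + x)) (1 / (1 + φ) ^ 2) φ := by
    refine ((hasDerivAt_id φ).div ((hasDerivAt_id φ).const_add 1) h1φ.ne').congr_deriv ?_
    simp only [id]; field_simp; ring
  refine (hFTC.comp φ hsubst).congr_deriv ?_
  rw [integrandF_div_one_add κ hφ]
  field_simp

theorem hasDerivAt_exp_mul_log_sub {κ φ : ℝ} (hφ : φ ≠ 0) :
    HasDerivAt (fun x => exp (κ * (log x - (1 + x) / x)))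
      (κ * (1 + φ) / φ ^ 2 * exp (κ * (log φ - (1 + φ) / φ))) φ := by
  have hq : HasDerivAt (fun x : ℝ => (1 + x) / x) (-(1 / φ ^ 2)) φ := by
    refine (((hasDerivAt_id φ).const_add 1).div (hasDerivAt_id φ) hφ).congr_deriv ?_
    simp only [id]; field_simp; ring
  refine (((hasDerivAt_log hφ).sub hq).const_mul κ).exp.congr_deriv ?_
  simp only [Pi.sub_apply]
  field_simp
  ring

theorem stmt4_general (lam μ c : ℝ) (hlam : 0 < lam) (hμ : μ ≠ 0)
    (κ : ℝ) (hκ : κ = 2 * lam / μ ^ 2)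
    (F G : ℝ → ℝ)
    (hF : ∀ φ : ℝ, F φ =
      ∫ u in (0:ℝ)..(φ / (1 + φ)),
        (1 / (u * (1 - u) ^ 2)) * Real.exp (κ * (Real.log (u / (1 - u)) - 1 / u)))
    (hG : ∀ φ : ℝ, G φ =
      μ ^ 2 / (2 * c) * Real.exp (κ * (Real.log φ - (1 + φ) / φ))) :
    ∀ φ ∈ Set.Ioi (0:ℝ),
      (deriv F φ < deriv G φ ↔ φ < lam / c) ∧
      (deriv F φ > deriv G φ ↔ φ > lam / c) := by
  intro φ (hφ : 0 < φ)
  have hκpos : 0 < κ := by rw [hκ]; positivity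
  set P := (1 + φ) / φ ^ 2 * exp (κ * (log φ - (1 + φ) / φ)) with hP_def
  have hP : 0 < P := by positivity
  have hF' : deriv F φ = φ * P := by
    rw [funext hF]
    refine (hasDerivAt_integral_integrandF hκpos hφ).deriv.trans ?_
    rw [hP_def]
    field_simp
  have hcoef : μ ^ 2 / (2 * c) * κ = lam / c := by
    rw [hκ]
    field_simp
  have hG' : deriv G φ = lam / c * P := by
    rw [funext hG, ((hasDerivAt_exp_mul_log_sub (ne_of_gt hφ)).const_mul _).deriv, ← hcoef]
    ring
  rw [hF', hG']
  exact ⟨mul_lt_mul_iff_left₀ hP, mul_lt_mul_iff_left₀ hP⟩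

/-- comparison of the derivatives of `F` and `G`:
`F'(φ) < G'(φ) ↔ φ < λ/c` and `F'(φ) > G'(φ) ↔ φ > λ/c` for `φ ∈ (0,∞)`. -/
theorem stmt4 (lam μ c : ℝ) (hlam : 0 < lam) (hμ : μ ≠ 0) (hc : 0 < c)
    (κ : ℝ) (hκ : κ = 2 * lam / μ ^ 2)
    (F G : ℝ → ℝ)
    (hF : ∀ φ : ℝ, F φ =
      ∫ u in (0:ℝ)..(φ / (1 + φ)),
        (1 / (u * (1 - u) ^ 2)) * Real.exp (κ * (Real.log (u / (1 - u)) - 1 / u)))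
    (hG : ∀ φ : ℝ, G φ =
      μ ^ 2 / (2 * c) * Real.exp (κ * (Real.log φ - (1 + φ) / φ))) :
    ∀ φ ∈ Set.Ioi (0:ℝ),
      (deriv F φ < deriv G φ ↔ φ < lam / c) ∧
      (deriv F φ > deriv G φ ↔ φ > lam / c) :=
  stmt4_general lam μ c hlam hμ κ hκ F G hF hG
end

section
/- With F and G as defined, lim_{φ→∞} F(φ)/G(φ) = ∞; in particular the ratio F'(φ)/G'(φ) = (c/λ)·φ for all φ ∈ (0,∞), which tends to ∞ as φ → ∞. -/
/-!
Under the substitution `u = φ / (1 + φ)` the integrand of `F` becomes `(1 + φ)³ / φ` times the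
exponential factor `w(φ)` of `G`, so `F' = (1 + φ) / φ · w` while `G' = (λ / c) (1 + φ) / φ² · w`;
their ratio is `(c / λ) φ`. The integral converges at `0` because `exp(-κ / u)` beats every power
of `u`. Since `G → ∞`, a one-sided l'Hôpital rule for `∞ / ∞` turns `F' / G' → ∞` into `F / G → ∞`.
-/

open Real Set Filter Topology

theorem tendsto_div_atTop_of_tendsto_deriv_div_atTop {f g : ℝ → ℝ}
    (hf : ∀ᶠ x in atTop, DifferentiableAt ℝ f x) (hg : ∀ᶠ x in atTop, DifferentiableAt ℝ g x)
    (hg' : ∀ᶠ x in atTop, 0 < deriv g x) (hgtop : Tendsto g atTop atTop)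
    (hdiv : Tendsto (fun x => deriv f x / deriv g x) atTop atTop) :
    Tendsto (fun x => f x / g x) atTop atTop := by
  -- Eventually `f' ≥ (b + 1) g'`, so `f - (b + 1) g` increases and `f / g ≥ b + 1 + o(1)`.
  refine tendsto_atTop.2 fun b => ?_
  obtain ⟨a, ha⟩ := eventually_atTop.1
    (hf.and (hg.and (hg'.and (hdiv.eventually_ge_atTop (b + 1)))))
  have hmono : MonotoneOn (fun x => f x - (b + 1) * g x) (Ici a) := by
    have hd : ∀ x ∈ Ici a, DifferentiableAt ℝ (fun x => f x - (b + 1) * g x) x :=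
      fun x hx => (ha x hx).1.sub ((ha x hx).2.1.const_mul _)
    refine monotoneOn_of_deriv_nonneg (convex_Ici a)
      (fun x hx => (hd x hx).continuousAt.continuousWithinAt)
      (fun x hx => (hd x (interior_subset hx)).differentiableWithinAt) fun x hx => ?_
    obtain ⟨hfx, hgx, hpos, hge⟩ := ha x (interior_subset hx)
    rw [deriv_fun_sub hfx (hgx.const_mul _), deriv_const_mul _ hgx, sub_nonneg]
    exact (le_div_iff₀ hpos).1 hge
  have hsmall : Tendsto (fun x => (f a - (b + 1) * g a) / g x) atTop (𝓝 0) :=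
    tendsto_const_nhds.div_atTop hgtop
  filter_upwards [eventually_ge_atTop a, hgtop.eventually_gt_atTop 0,
    hsmall.eventually (eventually_ge_nhds neg_one_lt_zero)] with x hxa hgx hsmallx
  have hratio : f x / g x - (b + 1) = (f x - (b + 1) * g x) / g x := by field_simp
  have := div_le_div_of_nonneg_right (hmono self_mem_Ici hxa hxa) hgx.le
  linarith

noncomputable def integrand (κ u : ℝ) : ℝ :=
  1 / (u * (1 - u) ^ 2) * exp (κ * (log (u / (1 - u)) - 1 / u))

noncomputable def weight (κ φ : ℝ) : ℝ :=
  exp (κ * (log φ - (1 + φ) / φ))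

theorem weight_pos (κ φ : ℝ) : 0 < weight κ φ := exp_pos _

section
variable {κ : ℝ}

-- Lean's `1 / 0 = 0` makes this value the continuous extension of the integrand.
theorem integrand_zero : integrand κ 0 = 0 := by
  simp [integrand]

theorem integrand_eq_mul {u : ℝ} (hu0 : 0 < u) (hu1 : u < 1) :
    integrand κ u =
      ((1 - u) ^ 2)⁻¹ * exp (-κ * log (1 - u)) * ((u⁻¹) ^ (1 - κ) * exp (-κ * u⁻¹)) := by
  have h1u : 0 < 1 - u := sub_pos.2 hu1
  have hinv : u⁻¹ = exp (-log u) := by rw [exp_neg, exp_log hu0]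
  rw [integrand, rpow_def_of_pos (inv_pos.2 hu0), log_inv, log_div hu0.ne' h1u.ne']
  simp only [one_div, mul_inv]
  calc _ = ((1 - u) ^ 2)⁻¹ * (exp (-log u) * exp (κ * (log u - log (1 - u) - u⁻¹))) := by
        rw [← hinv]; ring
    _ = _ := by
        simp only [← exp_add, mul_assoc]
        congr 2
        ring

theorem tendsto_integrand_nhdsGT_zero (hκ : 0 < κ) :
    Tendsto (integrand κ) (𝓝[>] 0) (𝓝 0) := by
  have hfactor : Tendsto (fun u : ℝ => ((1 - u) ^ 2)⁻¹ * exp (-κ * log (1 - u))) (𝓝[>] 0)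
      (𝓝 1) := by
    have : ContinuousAt (fun u : ℝ => ((1 - u) ^ 2)⁻¹ * exp (-κ * log (1 - u))) 0 := by
      fun_prop (disch := norm_num)
    simpa using this.tendsto.mono_left nhdsWithin_le_nhds
  have hdecay := (tendsto_rpow_mul_exp_neg_mul_atTop_nhds_zero (1 - κ) κ hκ).comp
    tendsto_inv_nhdsGT_zero
  have := hfactor.mul hdecay
  rw [mul_zero] at this
  refine this.congr' ?_
  filter_upwards [Ioo_mem_nhdsGT one_pos] with u hu
  exact (integrand_eq_mul hu.1 hu.2).symm

theorem continuousAt_integrand {u : ℝ} (hu0 : 0 < u) (hu1 : u < 1) :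
    ContinuousAt (integrand κ) u := by
  have h1u : 1 - u ≠ 0 := (sub_pos.2 hu1).ne'
  unfold integrand
  fun_prop (disch := first | positivity | exact h1u | exact div_ne_zero hu0.ne' h1u)

theorem continuousOn_integrand_Icc (hκ : 0 < κ) {p : ℝ} (hp : p < 1) :
    ContinuousOn (integrand κ) (Icc 0 p) := by
  intro x hx
  rcases hx.1.eq_or_lt with rfl | hx0
  · refine (continuousWithinAt_Ioi_iff_Ici.1 ?_).mono Icc_subset_Ici_self
    rw [ContinuousWithinAt, integrand_zero]
    exact tendsto_integrand_nhdsGT_zero hκ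
  · exact (continuousAt_integrand hx0 (hx.2.trans_lt hp)).continuousWithinAt

theorem integrand_div_one_add {φ : ℝ} (hφ : 0 < φ) :
    integrand κ (φ / (1 + φ)) = (1 + φ) ^ 3 / φ * weight κ φ := by
  have h1φ : 1 + φ ≠ 0 := by positivity
  have hsub : 1 - φ / (1 + φ) = 1 / (1 + φ) := by field_simp; ring
  rw [integrand, weight, hsub, div_div_div_cancel_right₀ h1φ, div_one, one_div_div]
  congr 1
  field_simp

theorem hasDerivAt_integral_integrand (hκ : 0 < κ) {φ : ℝ} (hφ : 0 < φ) :
    HasDerivAt (fun x => ∫ u in (0 : ℝ)..x / (1 + x), integrand κ u)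
      ((1 + φ) / φ * weight κ φ) φ := by
  have h1φ : 0 < 1 + φ := by positivity
  have hp0 : 0 < φ / (1 + φ) := by positivity
  have hp1 : φ / (1 + φ) < 1 := (div_lt_one h1φ).2 (by linarith)
  have hFTC := intervalIntegral.integral_hasDerivAt_right
    ((continuousOn_integrand_Icc hκ hp1).intervalIntegrable_of_Icc hp0.le)
    (ContinuousAt.stronglyMeasurableAtFilter isOpen_Ioo
      (fun u hu => continuousAt_integrand hu.1 hu.2) _ ⟨hp0, hp1⟩)
    (continuousAt_integrand hp0 hp1)
  have hinner : HasDerivAt (fun x : ℝ => x / (1 + x)) (1 / (1 + φ) ^ 2) φ := by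
    refine ((hasDerivAt_id φ).div ((hasDerivAt_id φ).const_add 1) h1φ.ne').congr_deriv ?_
    simp
  refine (hFTC.comp φ hinner).congr_deriv ?_
  rw [integrand_div_one_add hφ]
  field_simp

theorem hasDerivAt_weight {φ : ℝ} (hφ : 0 < φ) :
    HasDerivAt (weight κ) (κ * ((φ + 1) / φ ^ 2) * weight κ φ) φ := by
  have hexponent := ((hasDerivAt_log hφ.ne').sub
    (((hasDerivAt_id φ).const_add 1).div (hasDerivAt_id φ) hφ.ne')).const_mul κ
  unfold weight
  refine hexponent.exp.congr_deriv ?_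
  simp only [Pi.sub_apply, Pi.div_apply, id]
  field_simp
  ring

theorem tendsto_weight_atTop (hκ : 0 < κ) : Tendsto (weight κ) atTop atTop := by
  have hquot : Tendsto (fun φ : ℝ => -((1 + φ) / φ)) atTop (𝓝 (-(0 + 1))) := by
    refine (tendsto_inv_atTop_zero.add_const 1).neg.congr' ?_
    filter_upwards [eventually_gt_atTop 0] with φ hφ
    rw [add_div, div_self hφ.ne', one_div, add_comm]
  have := (tendsto_log_atTop.atTop_add hquot).const_mul_atTop hκ
  exact tendsto_exp_atTop.comp (by simpa only [sub_eq_add_neg] using this)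

end

/-- `F(φ)/G(φ) → ∞` as `φ → ∞`; in particular the ratio of the
derivatives satisfies `F'(φ)/G'(φ) = (c/λ)·φ` for all `φ ∈ (0,∞)`, which tends
to `∞` as `φ → ∞`. -/
theorem stmt5 (lam μ c : ℝ) (hlam : 0 < lam) (hμ : μ ≠ 0) (hc : 0 < c)
    (κ : ℝ) (hκ : κ = 2 * lam / μ ^ 2)
    (F G : ℝ → ℝ)
    (hF : ∀ φ : ℝ, F φ =
      ∫ u in (0:ℝ)..(φ / (1 + φ)),
        (1 / (u * (1 - u) ^ 2)) * Real.exp (κ * (Real.log (u / (1 - u)) - 1 / u)))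
    (hG : ∀ φ : ℝ, G φ =
      μ ^ 2 / (2 * c) * Real.exp (κ * (Real.log φ - (1 + φ) / φ))) :
    Filter.Tendsto (fun φ => F φ / G φ) Filter.atTop Filter.atTop ∧
    (∀ φ ∈ Set.Ioi (0:ℝ), deriv F φ / deriv G φ = (c / lam) * φ) ∧
    Filter.Tendsto (fun φ => deriv F φ / deriv G φ) Filter.atTop Filter.atTop := by
  have hκ0 : 0 < κ := by rw [hκ]; positivity
  have hFeq : F = fun x => ∫ u in (0 : ℝ)..x / (1 + x), integrand κ u := funext hF
  have hGeq : G = fun x => μ ^ 2 / (2 * c) * weight κ x := funext hG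
  have hF' : ∀ φ > 0, HasDerivAt F ((1 + φ) / φ * weight κ φ) φ := fun φ hφ => by
    rw [hFeq]; exact hasDerivAt_integral_integrand hκ0 hφ
  have hG' : ∀ φ > 0, HasDerivAt G (lam / c * ((φ + 1) / φ ^ 2) * weight κ φ) φ := fun φ hφ => by
    rw [hGeq]
    refine ((hasDerivAt_weight hφ).const_mul _).congr_deriv ?_
    rw [hκ]
    field_simp
  have hratio : ∀ φ ∈ Ioi (0 : ℝ), deriv F φ / deriv G φ = c / lam * φ := fun φ hφ => by
    rw [(hF' φ hφ).deriv, (hG' φ hφ).deriv]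
    have hw := (weight_pos κ φ).ne'
    have hφ0 : 0 < φ := hφ
    have h1φ : 1 + φ ≠ 0 := by positivity
    field_simp
    ring
  have hratio_top : Tendsto (fun φ => deriv F φ / deriv G φ) atTop atTop :=
    (tendsto_id.const_mul_atTop (by positivity)).congr' <|
      (eventually_gt_atTop 0).mono fun φ hφ => (hratio φ hφ).symm
  refine ⟨tendsto_div_atTop_of_tendsto_deriv_div_atTop ?_ ?_ ?_ ?_ hratio_top, hratio, hratio_top⟩
  · exact (eventually_gt_atTop 0).mono fun φ hφ => (hF' φ hφ).differentiableAt
  · exact (eventually_gt_atTop 0).mono fun φ hφ => (hG' φ hφ).differentiableAt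
  · refine (eventually_gt_atTop 0).mono fun φ hφ => ?_
    rw [(hG' φ hφ).deriv]
    have := weight_pos κ φ
    positivity
  · rw [hGeq]
    exact (tendsto_weight_atTop hκ0).const_mul_atTop (by positivity)
end

section
/- Define V̂(φ) = −(φ* − φ)/(c(1+φ*)) − (2/μ²)(1+φ) ∫_{φ*/(1+φ*)}^{φ/(1+φ)} ((1−v)/v)^κ e^{κ/v} ∫₀^v u^{κ−1}/(1−u)^{κ+2} e^{−κ/u} du dv for φ ∈ [0,φ*]. Then V̂(φ*) = 0, and V̂'(φ*) = 0 if and only if φ* satisfies (e^{κ(1+φ*)/φ*}/φ*^κ) ∫₀^{φ*/(1+φ*)} u^{κ−1}/(1−u)^{κ+2} e^{−κ/u} du = μ²/(2c). -/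
/-!
The integral in `V̂` vanishes at `φ = φ*`, so differentiating `(1 + φ) * ∫` at `φ*` leaves only
the chain-rule term from the upper limit `φ / (1 + φ)`, namely the outer integrand at
`φ* / (1 + φ*)` divided by `1 + φ*`. The fundamental theorem of calculus applies because the
outer integrand is continuous on `(0, 1)`: the inner kernel is integrable near `0`, being
`u ^ (κ - 1)` (integrable as `κ > 0`) times a factor bounded on `(0, b]` for `b < 1`.
At `φ* / (1 + φ*)` the weight `((1 - v) / v) ^ κ * exp (κ / v)` is `exp (κ (1 + φ*) / φ*) / φ* ^ κ`,
and `V̂'(φ*) = 0` becomes the transcendental equation.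
-/

open Real Set intervalIntegral MeasureTheory Filter Topology

noncomputable def smoothFitKernel (κ u : ℝ) : ℝ := u ^ (κ - 1) * (1 - u) ^ (-(κ + 2)) * exp (-κ / u)

noncomputable def smoothFitIntegrand (κ v : ℝ) : ℝ :=
  ((1 - v) / v) ^ κ * exp (κ / v) * ∫ u in (0:ℝ)..v, smoothFitKernel κ u

lemma intervalIntegrable_smoothFitKernel {κ b : ℝ} (hκ : 0 < κ) (hb0 : 0 ≤ b) (hb1 : b < 1) :
    IntervalIntegrable (smoothFitKernel κ) volume 0 b := by
  have hpow : IntegrableOn (fun u : ℝ => u ^ (κ - 1)) (Ioc 0 b) := by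
    have := intervalIntegrable_rpow' (a := 0) (b := b) (r := κ - 1) (by linarith)
    rwa [intervalIntegrable_iff, uIoc_of_le hb0] at this
  have hbound : ∀ᵐ u ∂(volume.restrict (Ioc 0 b)),
      ‖(1 - u) ^ (-(κ + 2)) * exp (-κ / u)‖ ≤ (1 - b) ^ (-(κ + 2)) := by
    filter_upwards [ae_restrict_mem measurableSet_Ioc] with u ⟨hu0, hub⟩
    have hexp : exp (-κ / u) ≤ 1 :=
      exp_le_one_iff.2 (div_nonpos_of_nonpos_of_nonneg (by linarith) hu0.le)
    have hrpow : (1 - u) ^ (-(κ + 2)) ≤ (1 - b) ^ (-(κ + 2)) :=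
      Real.rpow_le_rpow_of_nonpos (by linarith) (by linarith) (by linarith)
    have h1u : 0 ≤ 1 - u := by linarith
    rw [Real.norm_of_nonneg (by positivity)]
    simpa using mul_le_mul hrpow hexp (by positivity) (by positivity)
  rw [intervalIntegrable_iff, uIoc_of_le hb0]
  have h := hpow.mul_bdd (by fun_prop) hbound
  simp only [← mul_assoc] at h
  exact h

lemma continuousAt_integral_smoothFitKernel {κ v : ℝ} (hκ : 0 < κ) (hv0 : 0 < v) (hv1 : v < 1) :
    ContinuousAt (fun x => ∫ u in (0:ℝ)..x, smoothFitKernel κ u) v := by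
  have hb0 : 0 ≤ (v + 1) / 2 := by positivity
  have hcont := continuousOn_primitive_interval'
    (intervalIntegrable_smoothFitKernel hκ hb0 (by linarith)) left_mem_uIcc
  rw [uIcc_of_le hb0] at hcont
  exact hcont.continuousAt (Icc_mem_nhds hv0 (by linarith))

lemma continuousOn_smoothFitIntegrand {κ : ℝ} (hκ : 0 < κ) :
    ContinuousOn (smoothFitIntegrand κ) (Ioo 0 1) := by
  intro v ⟨hv0, hv1⟩
  refine ContinuousAt.continuousWithinAt ?_
  have hweight : ContinuousAt (fun v : ℝ => ((1 - v) / v) ^ κ * exp (κ / v)) v := by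
    fun_prop (disch := first | exact hv0.ne' | exact Or.inr hκ.le)
  exact hweight.mul (continuousAt_integral_smoothFitKernel hκ hv0 hv1)

lemma hasDerivAt_one_add_mul_integral_div_one_add {g : ℝ → ℝ} {x : ℝ} (hx : 1 + x ≠ 0)
    (hg : ContinuousAt g (x / (1 + x))) (hgm : StronglyMeasurableAtFilter g (𝓝 (x / (1 + x)))) :
    HasDerivAt (fun φ => (1 + φ) * ∫ v in x / (1 + x)..φ / (1 + φ), g v)
      (g (x / (1 + x)) / (1 + x)) x := by
  have hprim : HasDerivAt (fun y => ∫ v in x / (1 + x)..y, g v) (g (x / (1 + x))) (x / (1 + x)) :=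
    integral_hasDerivAt_right IntervalIntegrable.refl hgm hg
  have hinner : HasDerivAt (fun φ : ℝ => φ / (1 + φ)) (1 / (1 + x) ^ 2) x :=
    ((hasDerivAt_id' x).div ((hasDerivAt_id' x).const_add 1) hx).congr_deriv (by ring)
  have hprod := ((hasDerivAt_id' x).const_add 1).mul (hprim.comp x hinner)
  simp only [Function.comp_def, integral_same, mul_zero, zero_add] at hprod
  exact hprod.congr_deriv (by field_simp)

lemma smoothFitIntegrand_div_one_add (κ : ℝ) {x : ℝ} (hx : 0 < x) :
    smoothFitIntegrand κ (x / (1 + x)) =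
      exp (κ * (1 + x) / x) / x ^ κ * ∫ u in (0:ℝ)..(x / (1 + x)), smoothFitKernel κ u := by
  have h1x : 1 + x ≠ 0 := by positivity
  have hratio : (1 - x / (1 + x)) / (x / (1 + x)) = x⁻¹ := by field_simp; ring
  have hexp : κ / (x / (1 + x)) = κ * (1 + x) / x := by field_simp
  rw [smoothFitIntegrand, hratio, hexp, Real.inv_rpow hx.le]
  ring

/-- the candidate value function `V̂` satisfies `V̂(φ*) = 0`, and
the smooth-fit condition `V̂'(φ*) = 0` holds if and only if `φ*` solves the
transcendental equation (5.9). -/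
theorem stmt9 (lam μ c : ℝ) (hlam : 0 < lam) (hμ : μ ≠ 0) (hc : 0 < c)
    (κ : ℝ) (hκ : κ = 2 * lam / μ ^ 2)
    (φs : ℝ) (hφs : 0 < φs)
    (V : ℝ → ℝ)
    (hV : ∀ φ : ℝ, V φ =
      -((φs - φ) / (c * (1 + φs)))
      - 2 / μ ^ 2 * (1 + φ) *
        ∫ v in (φs / (1 + φs))..(φ / (1 + φ)),
          ((1 - v) / v) ^ κ * Real.exp (κ / v) *
            ∫ u in (0:ℝ)..v, u ^ (κ - 1) * (1 - u) ^ (-(κ + 2)) * Real.exp (-κ / u)) :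
    V φs = 0 ∧
    (deriv V φs = 0 ↔
      Real.exp (κ * (1 + φs) / φs) / φs ^ κ *
        ∫ u in (0:ℝ)..(φs / (1 + φs)),
          u ^ (κ - 1) * (1 - u) ^ (-(κ + 2)) * Real.exp (-κ / u)
      = μ ^ 2 / (2 * c)) := by
  have hκ0 : 0 < κ := hκ ▸ by positivity
  have h1φs : 0 < 1 + φs := by linarith
  set a := φs / (1 + φs)
  have ha : a ∈ Ioo 0 1 := ⟨by positivity, (div_lt_one h1φs).2 (by linarith)⟩
  have hVeq : V = fun φ => -((φs - φ) / (c * (1 + φs)))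
      - 2 / μ ^ 2 * ((1 + φ) * ∫ v in a..φ / (1 + φ), smoothFitIntegrand κ v) := by
    funext φ
    rw [hV, mul_assoc]
    rfl
  have hVderiv : HasDerivAt V
      (1 / (c * (1 + φs)) - 2 / μ ^ 2 * (smoothFitIntegrand κ a / (1 + φs))) φs := by
    have hlin : HasDerivAt (fun φ => -((φs - φ) / (c * (1 + φs)))) (1 / (c * (1 + φs))) φs :=
      ((((hasDerivAt_id' φs).const_sub φs).div_const _).neg).congr_deriv (by ring)
    rw [hVeq]
    exact hlin.sub ((hasDerivAt_one_add_mul_integral_div_one_add h1φs.ne'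
      ((continuousOn_smoothFitIntegrand hκ0).continuousAt (isOpen_Ioo.mem_nhds ha))
      ((continuousOn_smoothFitIntegrand hκ0).stronglyMeasurableAtFilter isOpen_Ioo a ha)).const_mul _)
  refine ⟨by simp [hV, a], ?_⟩
  change _ ↔ exp (κ * (1 + φs) / φs) / φs ^ κ * ∫ u in (0:ℝ)..a, smoothFitKernel κ u = _
  rw [← smoothFitIntegrand_div_one_add κ hφs, hVderiv.deriv]
  generalize smoothFitIntegrand κ a = G
  constructor <;> intro h <;> field_simp at h ⊢ <;> linarith
end

section
/- For any κ > 0, the integral ∫₀^v u^{κ−1}(1−u)^{−(κ+2)} e^{−κ/u} du is finite for every v ∈ (0,1), and the function v ↦ ((1−v)/v)^κ e^{κ/v} ∫₀^v u^{κ−1}(1−u)^{−(κ+2)} e^{−κ/u} du extends continuously to v = 0 with value 0. -/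
open Real Set Filter MeasureTheory intervalIntegral Topology

/-!
The derivative of `u ^ (κ + 1) * exp (-κ / u)` is `((κ + 1) u ^ κ + κ u ^ (κ - 1)) exp (-κ / u)`,
which dominates `κ u ^ (κ - 1) exp (-κ / u)`. Bounding `(1 - u) ^ (-(κ + 2))` by its value at
`u = v`, the integral is at most `(1 - v) ^ (-(κ + 2)) v ^ (κ + 1) exp (-κ / v) / κ`; the
exponentials cancel against the prefactor and leave `g v ≤ v (1 - v) ^ (-2) / κ → 0`.
-/

section
variable {b c : ℝ}

theorem hasDerivAt_rpow_mul_exp_neg_div {x : ℝ} (hx : x ≠ 0) :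
    HasDerivAt (fun u => u ^ b * exp (-c / u))
      ((b * x ^ (b - 1) + c * x ^ (b - 2)) * exp (-c / x)) x := by
  have hexp : HasDerivAt (fun u => exp (-c / u)) (exp (-c / x) * (c / x ^ 2)) x := by
    have := ((hasDerivAt_inv hx).const_mul (-c)).exp
    simp only [← div_eq_mul_inv] at this
    convert this using 2; ring
  refine ((hasDerivAt_rpow_const (p := b) (Or.inl hx)).mul hexp).congr_deriv ?_
  rw [show b - 2 = b - (2 : ℕ) by norm_num, rpow_sub_natCast hx b 2]
  ring

theorem continuousOn_rpow_mul_exp_neg_div (hb : 0 < b) (hc : 0 ≤ c) :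
    ContinuousOn (fun u => u ^ b * exp (-c / u)) (Ici 0) := by
  intro x hx
  rw [mem_Ici] at hx
  rcases hx.eq_or_lt with rfl | hx
  -- `exp (-c / 0)` is the junk value `1`, but the factor `u ^ b` still forces the limit `0`
  · have hbound : ∀ u ∈ Ici (0 : ℝ), ‖u ^ b * exp (-c / u)‖ ≤ u ^ b := fun u (hu : 0 ≤ u) => by
      rw [norm_of_nonneg (by positivity)]
      exact mul_le_of_le_one_right (by positivity)
        (exp_le_one_iff.mpr (div_nonpos_of_nonpos_of_nonneg (neg_nonpos.mpr hc) hu))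
    have hpow : Tendsto (fun u : ℝ => u ^ b) (𝓝[Ici 0] 0) (𝓝 0) := by
      simpa [zero_rpow hb.ne'] using
        (continuousAt_rpow_const 0 b (Or.inr hb.le)).tendsto.mono_left nhdsWithin_le_nhds
    simpa [ContinuousWithinAt, zero_rpow hb.ne'] using
      squeeze_zero_norm' (eventually_nhdsWithin_of_forall hbound) hpow
  · exact ((continuousAt_rpow_const x b (Or.inl hx.ne')).mul
      (continuousAt_const.div continuousAt_id hx.ne').rexp).continuousWithinAt

end

section
variable {a c v : ℝ}

theorem rpow_sub_one_mul_exp_neg_div_le_deriv (ha : -1 < a) {u : ℝ} (hu : 0 < u) :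
    c * (u ^ (a - 1) * exp (-c / u)) ≤
      ((a + 1) * u ^ (a + 1 - 1) + c * u ^ (a + 1 - 2)) * exp (-c / u) := by
  rw [add_sub_cancel_right, show a + 1 - 2 = a - 1 by ring]
  have : 0 ≤ (a + 1) * u ^ a * exp (-c / u) :=
    mul_nonneg (mul_nonneg (by linarith) (rpow_nonneg hu.le a)) (exp_pos _).le
  nlinarith

theorem integrableOn_rpow_sub_one_mul_exp_neg_div (ha : -1 < a) (hc : 0 < c) :
    IntegrableOn (fun u => u ^ (a - 1) * exp (-c / u)) (Ioc 0 v) := by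
  have hderiv : IntegrableOn
      (fun u => ((a + 1) * u ^ (a + 1 - 1) + c * u ^ (a + 1 - 2)) * exp (-c / u)) (Ioc 0 v) := by
    refine integrableOn_deriv_of_nonneg
      ((continuousOn_rpow_mul_exp_neg_div (by linarith) hc.le).mono Icc_subset_Ici_self)
      (fun x hx => hasDerivAt_rpow_mul_exp_neg_div hx.1.ne') (fun x hx => ?_)
    exact (mul_nonneg hc.le (mul_nonneg (rpow_nonneg hx.1.le _) (exp_pos _).le)).trans
      (rpow_sub_one_mul_exp_neg_div_le_deriv ha hx.1)
  refine (hderiv.div_const c).mono' (by fun_prop) ?_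
  filter_upwards [ae_restrict_mem measurableSet_Ioc] with u hu
  rw [norm_of_nonneg (by have := hu.1; positivity), le_div_iff₀' hc]
  exact rpow_sub_one_mul_exp_neg_div_le_deriv ha hu.1

theorem integral_rpow_sub_one_mul_exp_neg_div_le (ha : -1 < a) (hc : 0 < c) (hv : 0 ≤ v) :
    ∫ u in (0 : ℝ)..v, u ^ (a - 1) * exp (-c / u) ≤ v ^ (a + 1) * exp (-c / v) / c := by
  have hftc := integral_le_sub_of_hasDeriv_right_of_le hv
    ((continuousOn_rpow_mul_exp_neg_div (by linarith) hc.le).mono Icc_subset_Ici_self)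
    (fun x hx => (hasDerivAt_rpow_mul_exp_neg_div hx.1.ne').hasDerivWithinAt)
    ((integrableOn_Icc_iff_integrableOn_Ioc).mpr
      ((integrableOn_rpow_sub_one_mul_exp_neg_div ha hc).const_mul c))
    (fun x hx => rpow_sub_one_mul_exp_neg_div_le_deriv ha hx.1)
  rw [intervalIntegral.integral_const_mul, zero_rpow (by linarith), zero_mul, sub_zero] at hftc
  rwa [le_div_iff₀' hc]
end

section
variable {κ q v : ℝ}

theorem rpow_mul_one_sub_rpow_mul_exp_le (hq : q ≤ 0) (hv : v < 1) {u : ℝ} (hu : u ∈ Ioc 0 v) :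
    u ^ (κ - 1) * (1 - u) ^ q * exp (-κ / u) ≤ (1 - v) ^ q * (u ^ (κ - 1) * exp (-κ / u)) := by
  rw [mul_right_comm, mul_comm]
  exact mul_le_mul_of_nonneg_right
    (rpow_le_rpow_of_nonpos (by linarith) (by linarith [hu.2]) hq)
    (mul_nonneg (rpow_nonneg hu.1.le _) (exp_pos _).le)

theorem integrableOn_rpow_mul_one_sub_rpow_mul_exp (hκ : 0 < κ) (hq : q ≤ 0) (hv : v < 1) :
    IntegrableOn (fun u => u ^ (κ - 1) * (1 - u) ^ q * exp (-κ / u)) (Ioc 0 v) := by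
  refine (((integrableOn_rpow_sub_one_mul_exp_neg_div (a := κ) (by linarith) hκ).const_mul
    ((1 - v) ^ q)).mono' (by fun_prop) ?_)
  filter_upwards [ae_restrict_mem measurableSet_Ioc] with u hu
  have h1u : 0 < 1 - u := by linarith [hu.2]
  rw [norm_of_nonneg (mul_nonneg (mul_nonneg (rpow_nonneg hu.1.le _) (rpow_nonneg h1u.le _))
    (exp_pos _).le)]
  exact rpow_mul_one_sub_rpow_mul_exp_le hq hv hu

theorem integral_rpow_mul_one_sub_rpow_mul_exp_le (hκ : 0 < κ) (hq : q ≤ 0) (hv : v ∈ Ioo 0 1) :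
    ∫ u in (0 : ℝ)..v, u ^ (κ - 1) * (1 - u) ^ q * exp (-κ / u) ≤
      (1 - v) ^ q * (v ^ (κ + 1) * exp (-κ / v) / κ) := by
  have hφ : IntervalIntegrable (fun u => u ^ (κ - 1) * exp (-κ / u)) volume 0 v :=
    (intervalIntegrable_iff_integrableOn_Ioc_of_le hv.1.le).mpr
      (integrableOn_rpow_sub_one_mul_exp_neg_div (by linarith) hκ)
  calc ∫ u in (0 : ℝ)..v, u ^ (κ - 1) * (1 - u) ^ q * exp (-κ / u)
      ≤ ∫ u in (0 : ℝ)..v, (1 - v) ^ q * (u ^ (κ - 1) * exp (-κ / u)) :=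
        integral_mono_on_of_le_Ioo hv.1.le
          ((intervalIntegrable_iff_integrableOn_Ioc_of_le hv.1.le).mpr
            (integrableOn_rpow_mul_one_sub_rpow_mul_exp hκ hq hv.2))
          (hφ.const_mul _)
          (fun u hu => rpow_mul_one_sub_rpow_mul_exp_le hq hv.2 (Ioo_subset_Ioc_self hu))
    _ ≤ (1 - v) ^ q * (v ^ (κ + 1) * exp (-κ / v) / κ) := by
        rw [intervalIntegral.integral_const_mul]
        exact mul_le_mul_of_nonneg_left
          (integral_rpow_sub_one_mul_exp_neg_div_le (by linarith) hκ hv.1.le)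
          (rpow_nonneg (by linarith [hv.2]) _)

theorem prefactor_mul_bound_eq (hv : v ∈ Ioo 0 1) :
    ((1 - v) / v) ^ κ * exp (κ / v) * ((1 - v) ^ (-(κ + 2)) * (v ^ (κ + 1) * exp (-κ / v) / κ))
      = v * (1 - v) ^ (-2 : ℝ) / κ := by
  have h1v : 0 < 1 - v := by linarith [hv.2]
  have hexp : exp (κ / v) * exp (-κ / v) = 1 := by rw [← exp_add, neg_div, add_neg_cancel, exp_zero]
  have hpow : (1 - v) ^ κ * (1 - v) ^ (-(κ + 2)) = (1 - v) ^ (-2 : ℝ) := by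
    rw [← rpow_add h1v]; ring_nf
  have hvκ : v ^ κ ≠ 0 := (rpow_pos_of_pos hv.1 κ).ne'
  rw [div_rpow h1v.le hv.1.le, rpow_add_one hv.1.ne']
  calc _ = (1 - v) ^ κ * (1 - v) ^ (-(κ + 2)) * (exp (κ / v) * exp (-κ / v)) * (v ^ κ / v ^ κ)
        * v / κ := by ring
    _ = _ := by rw [hpow, hexp, div_self hvκ]; ring
end

/-- for `κ > 0` the inner integrand is integrable on `(0,v)` for
every `v ∈ (0,1)`, and
`g(v) = ((1−v)/v)^κ e^{κ/v} ∫₀^v u^{κ−1}(1−u)^{−(κ+2)} e^{−κ/u} du`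
tends to `0` as `v → 0+`. -/
theorem stmt19 (κ : ℝ) (hκ : 0 < κ) :
    (∀ v ∈ Set.Ioo (0:ℝ) 1,
      IntervalIntegrable
        (fun u => u ^ (κ - 1) * (1 - u) ^ (-(κ + 2)) * Real.exp (-κ / u))
        MeasureTheory.volume 0 v) ∧
    Filter.Tendsto
      (fun v => ((1 - v) / v) ^ κ * Real.exp (κ / v) *
        ∫ u in (0:ℝ)..v, u ^ (κ - 1) * (1 - u) ^ (-(κ + 2)) * Real.exp (-κ / u))
      (nhdsWithin 0 (Set.Ioi 0)) (nhds 0) := by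
  have hq : -(κ + 2) ≤ 0 := by linarith
  refine ⟨fun v hv => (intervalIntegrable_iff_integrableOn_Ioc_of_le hv.1.le).mpr
    (integrableOn_rpow_mul_one_sub_rpow_mul_exp hκ hq hv.2), ?_⟩
  have hbound : Tendsto (fun v : ℝ => v * (1 - v) ^ (-2 : ℝ) / κ) (𝓝[>] 0) (𝓝 0) := by
    have : ContinuousAt (fun v : ℝ => v * (1 - v) ^ (-2 : ℝ) / κ) 0 :=
      (continuousAt_id.mul ((continuousAt_const.sub continuousAt_id).rpow_const
        (Or.inl (by norm_num)))).div_const κ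
    simpa using this.tendsto.mono_left nhdsWithin_le_nhds
  have hpre : ∀ v ∈ Ioo (0 : ℝ) 1, 0 ≤ ((1 - v) / v) ^ κ * exp (κ / v) := fun v hv =>
    mul_nonneg (rpow_nonneg (div_nonneg (by linarith [hv.2]) hv.1.le) κ) (exp_pos _).le
  refine squeeze_zero' ?_ ?_ hbound <;> filter_upwards [Ioo_mem_nhdsGT zero_lt_one] with v hv
  · refine mul_nonneg (hpre v hv) (intervalIntegral.integral_nonneg hv.1.le fun u hu => ?_)
    have h1u : 0 ≤ 1 - u := by linarith [hu.2, hv.2]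
    have := hu.1
    positivity
  · rw [← prefactor_mul_bound_eq hv]
    exact mul_le_mul_of_nonneg_left (integral_rpow_mul_one_sub_rpow_mul_exp_le hκ hq hv)
      (hpre v hv)
end
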